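/- arXiv:2305.07765 — 12 statements merged into one kernel-verified Lean document; each statement's English description precedes it below -/
import Mathlib

section
/- For any real number γ > 1 and any finite-dimensional vectors x, y ∈ ℝ^d, there exists a constant C₁ > 0 depending only on γ and d such that for every δ with 0 ≤ δ ≤ 1, ‖ ‖x‖^{γ-2} x − ‖y‖^{γ-2} y ‖ ≤ C₁ ‖x − y‖^{1−δ} (‖x‖ + ‖y‖)^{γ−2+δ}, where ‖·‖ is the Euclidean norm. -/
/-!
Write `p = γ - 2`, `t = ‖x - y‖` and `s = ‖x‖ + ‖y‖`, so that `t ≤ s`. Since `t / s ≤ 1`, the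
right-hand side `t ^ (1 - δ) * s ^ (p + δ)` increases with `δ`, so it suffices to prove the
estimate for the smallest admissible `δ`: the Lipschitz bound `≲ s ^ p * t` when `p ≥ 0`, and the
Hölder bound `≲ t ^ (p + 1)` when `-1 < p < 0`. Both follow from splitting
`‖x‖ ^ p • x - ‖y‖ ^ p • y = ‖x‖ ^ p • (x - y) + (‖x‖ ^ p - ‖y‖ ^ p) • y` and the mean value
theorem for `u ↦ u ^ p`; when `p < 0` and `‖y‖ < t`, one instead bounds both terms by
`(2 t) ^ (p + 1)`.
-/

open Real

lemma exists_abs_rpow_sub_rpow_mul_le (p : ℝ) {a b : ℝ} (hb : 0 ≤ b) (hba : b ≤ a) :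
    ∃ c ∈ Set.Icc b a, |a ^ p - b ^ p| * b ≤ |p| * c ^ p * (a - b) := by
  rcases hb.eq_or_lt with rfl | hb
  · exact ⟨a, ⟨hba, le_rfl⟩, by rw [mul_zero, sub_zero]; positivity⟩
  rcases hba.eq_or_lt with rfl | hba
  · exact ⟨b, ⟨le_rfl, le_rfl⟩, by simp⟩
  have hderiv : ∀ u ∈ Set.Ioo b a, HasDerivAt (· ^ p) (p * u ^ (p - 1)) u := fun u hu =>
    hasDerivAt_rpow_const (Or.inl (hb.trans hu.1).ne')
  have hcont : ContinuousOn (· ^ p) (Set.Icc b a) := fun u hu =>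
    (continuousAt_rpow_const _ _ (Or.inl (hb.trans_le hu.1).ne')).continuousWithinAt
  obtain ⟨c, hc, hslope⟩ := exists_hasDerivAt_eq_slope _ _ hba hcont hderiv
  have hc0 : 0 < c := hb.trans hc.1
  have hmvt : a ^ p - b ^ p = p * c ^ (p - 1) * (a - b) := by
    rw [hslope, div_mul_cancel₀ _ (sub_ne_zero.2 hba.ne')]
  refine ⟨c, ⟨hc.1.le, hc.2.le⟩, ?_⟩
  calc |a ^ p - b ^ p| * b = |p| * c ^ (p - 1) * (a - b) * b := by
        rw [hmvt, abs_mul, abs_mul, abs_of_pos (rpow_pos_of_pos hc0 _),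
          abs_of_pos (sub_pos.2 hba)]
    _ ≤ |p| * c ^ (p - 1) * (a - b) * c := by gcongr; exact hc.1.le
    _ = |p| * c ^ p * (a - b) := by
        rw [mul_right_comm, mul_assoc (|p|), ← rpow_add_one hc0.ne', sub_add_cancel]

lemma rpow_mul_rpow_le_of_le {t s δ₀ δ e : ℝ} (ht : 0 ≤ t) (hts : t ≤ s) (hδ₀ : δ₀ < 1)
    (hδ : δ₀ ≤ δ) : t ^ (1 - δ₀) * s ^ (e + δ₀) ≤ t ^ (1 - δ) * s ^ (e + δ) := by
  rcases ht.eq_or_lt with rfl | ht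
  · rw [zero_rpow (by linarith), zero_mul]
    exact mul_nonneg (rpow_nonneg le_rfl _) (rpow_nonneg hts _)
  have hs : 0 < s := ht.trans_le hts
  calc t ^ (1 - δ₀) * s ^ (e + δ₀) = t ^ (1 - δ) * t ^ (δ - δ₀) * s ^ (e + δ₀) := by
        rw [← rpow_add ht]; ring_nf
    _ ≤ t ^ (1 - δ) * s ^ (δ - δ₀) * s ^ (e + δ₀) := by
        gcongr
    _ = t ^ (1 - δ) * s ^ (e + δ) := by
        rw [mul_assoc, ← rpow_add hs]; ring_nf

section NormedSpace

variable {E : Type*} [NormedAddCommGroup E] [NormedSpace ℝ E]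

lemma norm_rpow_smul_sub_rpow_smul_le (p : ℝ) (x y : E) :
    ‖‖x‖ ^ p • x - ‖y‖ ^ p • y‖ ≤ ‖x‖ ^ p * ‖x - y‖ + |‖x‖ ^ p - ‖y‖ ^ p| * ‖y‖ := by
  have hsplit : ‖x‖ ^ p • x - ‖y‖ ^ p • y = ‖x‖ ^ p • (x - y) + (‖x‖ ^ p - ‖y‖ ^ p) • y := by
    rw [smul_sub, sub_smul]; abel
  rw [hsplit]
  refine (norm_add_le _ _).trans_eq ?_
  rw [norm_smul, norm_smul, norm_eq_abs, norm_eq_abs, abs_of_nonneg (by positivity)]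

lemma norm_rpow_smul_sub_rpow_smul_le_of_nonneg {p : ℝ} (hp : 0 ≤ p) (x y : E) :
    ‖‖x‖ ^ p • x - ‖y‖ ^ p • y‖ ≤ (1 + p) * (‖x‖ + ‖y‖) ^ p * ‖x - y‖ := by
  wlog hyx : ‖y‖ ≤ ‖x‖ generalizing x y
  · simpa only [norm_sub_rev, add_comm ‖y‖] using this y x (le_of_not_ge hyx)
  obtain ⟨c, hc, hmvt⟩ := exists_abs_rpow_sub_rpow_mul_le p (norm_nonneg y) hyx
  have hcs : c ^ p ≤ (‖x‖ + ‖y‖) ^ p := by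
    gcongr
    · exact (norm_nonneg y).trans hc.1
    · linarith [hc.2, norm_nonneg y]
  have hxs : ‖x‖ ^ p ≤ (‖x‖ + ‖y‖) ^ p := by gcongr; linarith [norm_nonneg y]
  have hdiff : ‖x‖ - ‖y‖ ≤ ‖x - y‖ := norm_sub_norm_le x y
  calc ‖‖x‖ ^ p • x - ‖y‖ ^ p • y‖
      ≤ ‖x‖ ^ p * ‖x - y‖ + |p| * c ^ p * (‖x‖ - ‖y‖) :=
        (norm_rpow_smul_sub_rpow_smul_le p x y).trans (by linarith)
    _ ≤ (‖x‖ + ‖y‖) ^ p * ‖x - y‖ + p * (‖x‖ + ‖y‖) ^ p * ‖x - y‖ := by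
        rw [abs_of_nonneg hp]
        gcongr
    _ = (1 + p) * (‖x‖ + ‖y‖) ^ p * ‖x - y‖ := by ring

lemma norm_rpow_smul_sub_rpow_smul_le_of_neg {p : ℝ} (hp₁ : -1 < p) (hp₀ : p < 0) (x y : E) :
    ‖‖x‖ ^ p • x - ‖y‖ ^ p • y‖ ≤ 4 * ‖x - y‖ ^ (p + 1) := by
  wlog hyx : ‖y‖ ≤ ‖x‖ generalizing x y
  · simpa only [norm_sub_rev] using this y x (le_of_not_ge hyx)
  rcases eq_or_ne x y with rfl | hxy
  · simp only [sub_self, norm_zero]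
    positivity
  set t := ‖x - y‖
  have ht : 0 < t := norm_pos_iff.2 (sub_ne_zero.2 hxy)
  have htp : t ^ (p + 1) = t ^ p * t := rpow_add_one ht.ne' p
  rcases le_or_gt t ‖y‖ with hty | hyt
  · -- `‖x‖`, `‖y‖` and the intermediate point are `≥ t`, where `u ^ p ≤ t ^ p`
    obtain ⟨c, hc, hmvt⟩ := exists_abs_rpow_sub_rpow_mul_le p (norm_nonneg y) hyx
    have hxt : ‖x‖ ^ p ≤ t ^ p := rpow_le_rpow_of_nonpos ht (hty.trans hyx) hp₀.le
    have hct : c ^ p ≤ t ^ p := rpow_le_rpow_of_nonpos ht (hty.trans hc.1) hp₀.le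
    have hdiff : ‖x‖ - ‖y‖ ≤ t := norm_sub_norm_le x y
    calc ‖‖x‖ ^ p • x - ‖y‖ ^ p • y‖
        ≤ ‖x‖ ^ p * t + |p| * c ^ p * (‖x‖ - ‖y‖) :=
          (norm_rpow_smul_sub_rpow_smul_le p x y).trans (by linarith)
      _ ≤ t ^ p * t + 1 * t ^ p * t := by
          gcongr
          · exact rpow_nonneg ((norm_nonneg y).trans hc.1) p
          · rw [abs_of_neg hp₀]; linarith
      _ ≤ 4 * t ^ (p + 1) := by
          rw [htp]; nlinarith [rpow_nonneg ht.le p]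
  · -- both `x` and `y` lie in the ball of radius `2 t`
    have hx2t : ‖x‖ ≤ 2 * t := by linarith [norm_le_norm_add_norm_sub' x y]
    have hnorm : ∀ z : E, ‖‖z‖ ^ p • z‖ = ‖z‖ ^ (p + 1) := fun z => by
      rw [norm_smul, norm_eq_abs, abs_of_nonneg (by positivity),
        rpow_add_one' (norm_nonneg z) (by linarith)]
    have h2 : (2 * t) ^ (p + 1) ≤ 2 * t ^ (p + 1) := by
      rw [mul_rpow zero_le_two ht.le]
      gcongr
      calc (2 : ℝ) ^ (p + 1) ≤ 2 ^ (1 : ℝ) := by gcongr <;> linarith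
        _ = 2 := rpow_one 2
    calc ‖‖x‖ ^ p • x - ‖y‖ ^ p • y‖
        ≤ ‖x‖ ^ (p + 1) + ‖y‖ ^ (p + 1) := by
          rw [← hnorm x, ← hnorm y]; exact norm_sub_le _ _
      _ ≤ (2 * t) ^ (p + 1) + (2 * t) ^ (p + 1) := by
          gcongr <;> linarith
      _ ≤ 4 * t ^ (p + 1) := by linarith

end NormedSpace

theorem stmt_0_general (d : ℕ) (γ : ℝ) (hγ : 1 < γ) :
    ∃ C₁ : ℝ, 0 < C₁ ∧ ∀ (x y : EuclideanSpace ℝ (Fin d)) (δ : ℝ),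
      0 ≤ δ → δ ≤ 1 → 0 ≤ γ - 2 + δ →
      ‖(‖x‖ ^ (γ - 2)) • x - (‖y‖ ^ (γ - 2)) • y‖ ≤
        C₁ * ‖x - y‖ ^ (1 - δ) * (‖x‖ + ‖y‖) ^ (γ - 2 + δ) := by
  refine ⟨γ + 3, by linarith, fun x y δ hδ₀ _ hγδ => ?_⟩
  have hts : ‖x - y‖ ≤ ‖x‖ + ‖y‖ := norm_sub_le x y
  rw [mul_assoc]
  rcases le_or_gt 0 (γ - 2) with hp | hp
  · have hinterp := rpow_mul_rpow_le_of_le (e := γ - 2) (norm_nonneg _) hts zero_lt_one hδ₀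
    rw [sub_zero, rpow_one, add_zero] at hinterp
    calc _ ≤ (1 + (γ - 2)) * (‖x‖ + ‖y‖) ^ (γ - 2) * ‖x - y‖ :=
          norm_rpow_smul_sub_rpow_smul_le_of_nonneg hp x y
      _ = (γ - 1) * (‖x - y‖ * (‖x‖ + ‖y‖) ^ (γ - 2)) := by ring
      _ ≤ _ := by gcongr; linarith
  · have hinterp := rpow_mul_rpow_le_of_le (e := γ - 2) (δ₀ := 2 - γ) (δ := δ) (norm_nonneg _)
      hts (by linarith) (by linarith)
    rw [show γ - 2 + (2 - γ) = 0 by ring, rpow_zero, mul_one,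
      show 1 - (2 - γ) = γ - 2 + 1 by ring] at hinterp
    calc _ ≤ 4 * ‖x - y‖ ^ (γ - 2 + 1) :=
          norm_rpow_smul_sub_rpow_smul_le_of_neg (by linarith) hp x y
      _ ≤ _ := by gcongr; linarith

theorem stmt_0 (d : ℕ) (hd : 1 ≤ d) (γ : ℝ) (hγ : 1 < γ) :
    ∃ C₁ : ℝ, 0 < C₁ ∧ ∀ (x y : EuclideanSpace ℝ (Fin d)) (δ : ℝ),
      0 ≤ δ → δ ≤ 1 → 0 ≤ γ - 2 + δ →
      ‖(‖x‖ ^ (γ - 2)) • x - (‖y‖ ^ (γ - 2)) • y‖ ≤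
        C₁ * ‖x - y‖ ^ (1 - δ) * (‖x‖ + ‖y‖) ^ (γ - 2 + δ) :=
  stmt_0_general d γ hγ
end

section
/- For any real number γ > 1 and any vectors x, y ∈ ℝ^d, there exists a constant C₂ > 0 depending only on γ and d such that for every δ ≥ 0 with γ − 2 − δ ≥ 0, ⟨x − y, ‖x‖^{γ-2} x − ‖y‖^{γ-2} y⟩ ≥ C₂ ‖x − y‖^{2+δ} (‖x‖ + ‖y‖)^{γ−2−δ}, where ⟨·,·⟩ is the standard inner product on ℝ^d. -/
/-!
Writing `A = ‖x‖ ^ (γ - 2)` and `B = ‖y‖ ^ (γ - 2)`, polarisation gives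
`⟪x - y, A • x - B • y⟫ = (A + B) / 2 * ‖x - y‖ ^ 2 + (A - B) * (‖x‖ ^ 2 - ‖y‖ ^ 2) / 2`,
and the last term is nonnegative because `t ↦ t ^ (γ - 2)` is monotone. Since
`(‖x‖ + ‖y‖) ^ (γ - 2) ≤ 2 ^ (γ - 2) * (A + B)`, the pairing is at least
`2 ^ (1 - γ) * ‖x - y‖ ^ 2 * (‖x‖ + ‖y‖) ^ (γ - 2)`, and trading the factor `‖x - y‖ ^ δ` for
`(‖x‖ + ‖y‖) ^ δ` only decreases the right-hand side since `‖x - y‖ ≤ ‖x‖ + ‖y‖`.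
-/

open RealInnerProductSpace

namespace Real

lemma add_rpow_le_two_rpow_mul_rpow_add_rpow {a b p : ℝ} (ha : 0 ≤ a) (hb : 0 ≤ b)
    (hp : 0 ≤ p) : (a + b) ^ p ≤ 2 ^ p * (a ^ p + b ^ p) := by
  have hmax : max a b ^ p ≤ a ^ p + b ^ p := by
    rcases max_choice a b with h | h <;> rw [h]
    · linarith [rpow_nonneg hb p]
    · linarith [rpow_nonneg ha p]
  calc (a + b) ^ p ≤ (2 * max a b) ^ p := by
        gcongr; rw [two_mul]; exact add_le_add (le_max_left a b) (le_max_right a b)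
    _ = 2 ^ p * max a b ^ p := mul_rpow zero_le_two (le_max_of_le_left ha)
    _ ≤ 2 ^ p * (a ^ p + b ^ p) := by gcongr

lemma rpow_add_mul_rpow_le {n s a δ q : ℝ} (hn : 0 ≤ n) (hns : n ≤ s) (ha : 0 ≤ a)
    (hδ : 0 ≤ δ) (hq : 0 ≤ q) : n ^ (a + δ) * s ^ q ≤ n ^ a * s ^ (δ + q) := by
  have hs : 0 ≤ s := hn.trans hns
  rw [rpow_add_of_nonneg hn ha hδ, rpow_add_of_nonneg hs hδ hq, mul_assoc]
  gcongr

end Real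

section InnerProductSpace

variable {E : Type*} [NormedAddCommGroup E] [InnerProductSpace ℝ E]

lemma inner_sub_smul_sub_smul (x y : E) (A B : ℝ) :
    ⟪x - y, A • x - B • y⟫ =
      (A + B) / 2 * ‖x - y‖ ^ 2 + (A - B) * (‖x‖ ^ 2 - ‖y‖ ^ 2) / 2 := by
  rw [norm_sub_sq_real]
  simp only [inner_sub_left, inner_sub_right, real_inner_smul_right,
    real_inner_self_eq_norm_sq, real_inner_comm x y]
  ring

lemma half_mul_norm_sub_sq_le_inner_rpow_smul_sub (x y : E) {p : ℝ} (hp : 0 ≤ p) :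
    (‖x‖ ^ p + ‖y‖ ^ p) / 2 * ‖x - y‖ ^ 2 ≤ ⟪x - y, ‖x‖ ^ p • x - ‖y‖ ^ p • y⟫ := by
  have hmono : 0 ≤ (‖x‖ ^ p - ‖y‖ ^ p) * (‖x‖ ^ 2 - ‖y‖ ^ 2) := by
    rcases le_total ‖x‖ ‖y‖ with h | h
    · exact mul_nonneg_of_nonpos_of_nonpos
        (sub_nonpos.2 (Real.rpow_le_rpow (norm_nonneg x) h hp))
        (sub_nonpos.2 (pow_le_pow_left₀ (norm_nonneg x) h 2))
    · exact mul_nonneg (sub_nonneg.2 (Real.rpow_le_rpow (norm_nonneg y) h hp))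
        (sub_nonneg.2 (pow_le_pow_left₀ (norm_nonneg y) h 2))
  rw [inner_sub_smul_sub_smul]
  linarith

end InnerProductSpace

theorem stmt_1_general (d : ℕ) (γ : ℝ) :
    ∃ C₂ : ℝ, 0 < C₂ ∧ ∀ (x y : EuclideanSpace ℝ (Fin d)) (δ : ℝ),
      0 ≤ δ → 0 ≤ γ - 2 - δ →
      (inner ℝ (x - y) ((‖x‖ ^ (γ - 2)) • x - (‖y‖ ^ (γ - 2)) • y) : ℝ) ≥
        C₂ * ‖x - y‖ ^ (2 + δ) * (‖x‖ + ‖y‖) ^ (γ - 2 - δ) := by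
  refine ⟨(2 ^ (γ - 1))⁻¹, by positivity, fun x y δ hδ hγδ => ?_⟩
  have hp : 0 ≤ γ - 2 := by linarith
  have htrade := Real.rpow_add_mul_rpow_le (norm_nonneg (x - y)) (norm_sub_le x y)
    zero_le_two hδ hγδ
  have hsum := Real.add_rpow_le_two_rpow_mul_rpow_add_rpow (norm_nonneg x) (norm_nonneg y) hp
  have hmain := half_mul_norm_sub_sq_le_inner_rpow_smul_sub x y hp
  have hpow : (2 : ℝ) ^ (γ - 1) = 2 * 2 ^ (γ - 2) := by
    rw [show γ - 1 = 1 + (γ - 2) by ring, Real.rpow_add zero_lt_two, Real.rpow_one]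
  rw [add_sub_cancel, Real.rpow_two] at htrade
  rw [ge_iff_le, mul_assoc, hpow]
  calc (2 * 2 ^ (γ - 2))⁻¹ * (‖x - y‖ ^ (2 + δ) * (‖x‖ + ‖y‖) ^ (γ - 2 - δ))
      ≤ (2 * 2 ^ (γ - 2))⁻¹ * (‖x - y‖ ^ 2 * (2 ^ (γ - 2) * (‖x‖ ^ (γ - 2) + ‖y‖ ^ (γ - 2)))) := by
        refine mul_le_mul_of_nonneg_left (htrade.trans ?_) (by positivity)
        exact mul_le_mul_of_nonneg_left hsum (sq_nonneg _)
    _ = (‖x‖ ^ (γ - 2) + ‖y‖ ^ (γ - 2)) / 2 * ‖x - y‖ ^ 2 := by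
        field_simp
    _ ≤ _ := hmain

theorem stmt_1 (d : ℕ) (hd : 1 ≤ d) (γ : ℝ) (hγ : 1 < γ) :
    ∃ C₂ : ℝ, 0 < C₂ ∧ ∀ (x y : EuclideanSpace ℝ (Fin d)) (δ : ℝ),
      0 ≤ δ → 0 ≤ γ - 2 - δ →
      (inner ℝ (x - y) ((‖x‖ ^ (γ - 2)) • x - (‖y‖ ^ (γ - 2)) • y) : ℝ) ≥
        C₂ * ‖x - y‖ ^ (2 + δ) * (‖x‖ + ‖y‖) ^ (γ - 2 - δ) :=
  stmt_1_general d γ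
end

section
/- Let y : [0, ∞) → ℝ be a differentiable nonnegative function, 1 < p < 2, C_m > 0, B ≥ 0, and ψ : [0,∞) → [0,∞) continuous, with y'(t) ≤ −2C_m ψ(t) y(t)^{p−1} + B y(t) wherever y(t) > 0. If y(0)^{2−p} < 2C_m(2−p) ∫₀^∞ ψ(s) e^{−B(2−p)s} ds, then there exists T > 0 such that y(t) = 0 for all t ≥ T. -/
/-!
With `a = 2 - p`, the Bernoulli substitution `z = y ^ a` turns the differential inequality into the
linear one `z' ≤ -2 Cm a ψ + B a z` as long as `y > 0`. Multiplying by the integrating factor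
`exp (-B a t)` shows that `z t * exp (-B a t) + 2 Cm a ∫₀ᵗ ψ s exp (-B a s) ds` is nonincreasing,
so `y` cannot stay positive on `[0, T]` once the accumulated dissipation `2 Cm a ∫₀ᵀ …` exceeds
`y 0 ^ a`; by hypothesis this happens for some finite `T`.
-/

open Set Filter MeasureTheory

theorem bernoulli_substitution_le {u d K B p : ℝ} (hu : 0 < u) (hp : p ≤ 2)
    (h : d ≤ -K * u ^ (p - 1) + B * u) :
    d * (2 - p) * u ^ (2 - p - 1) ≤ -((2 - p) * K) + B * (2 - p) * u ^ (2 - p) := by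
  have hinv : u ^ (p - 1) * u ^ (2 - p - 1) = 1 := by
    rw [← Real.rpow_add hu, show p - 1 + (2 - p - 1) = 0 by ring, Real.rpow_zero]
  have hmul : u * u ^ (2 - p - 1) = u ^ (2 - p) := by
    rw [Real.rpow_sub_one hu.ne']; field_simp
  calc d * (2 - p) * u ^ (2 - p - 1)
      ≤ (-K * u ^ (p - 1) + B * u) * (2 - p) * u ^ (2 - p - 1) := by
        gcongr
    _ = -((2 - p) * K) + B * (2 - p) * u ^ (2 - p) := by
        linear_combination (-(2 - p) * K) * hinv + (B * (2 - p)) * hmul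

theorem antitoneOn_mul_exp_add_integral {z z' f : ℝ → ℝ} {a b l : ℝ} (hf : Continuous f)
    (hz : ∀ x ∈ Icc a b, HasDerivAt z (z' x) x)
    (hz' : ∀ x ∈ Ioo a b, z' x ≤ -f x + l * z x) :
    AntitoneOn (fun t ↦ z t * Real.exp (-l * t) + ∫ s in a..t, f s * Real.exp (-l * s))
      (Icc a b) := by
  have hcont : Continuous fun s ↦ f s * Real.exp (-l * s) := by fun_prop
  have hderiv : ∀ x ∈ Icc a b, HasDerivAt
      (fun t ↦ z t * Real.exp (-l * t) + ∫ s in a..t, f s * Real.exp (-l * s))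
      ((z' x - l * z x + f x) * Real.exp (-l * x)) x := by
    intro x hx
    have hexp : HasDerivAt (fun t ↦ Real.exp (-l * t)) (-l * Real.exp (-l * x)) x := by
      simpa [mul_comm] using ((hasDerivAt_id x).const_mul (-l)).exp
    exact (((hz x hx).mul hexp).add (hcont.integral_hasStrictDerivAt a x).hasDerivAt).congr_deriv
      (by ring)
  refine antitoneOn_of_hasDerivWithinAt_nonpos (convex_Icc a b)
    (fun x hx ↦ (hderiv x hx).continuousAt.continuousWithinAt)
    (fun x hx ↦ (hderiv x (interior_subset hx)).hasDerivWithinAt) fun x hx ↦ ?_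
  rw [interior_Icc] at hx
  exact mul_nonpos_of_nonpos_of_nonneg (by linarith [hz' x hx]) (Real.exp_pos _).le

theorem eventually_lt_intervalIntegral_of_lt_integral_Ioi {f : ℝ → ℝ} {a x : ℝ} (hx : 0 ≤ x)
    (h : x < ∫ s in Ioi a, f s) : ∀ᶠ T in atTop, x < ∫ s in a..T, f s := by
  have hint : IntegrableOn f (Ioi a) := by
    by_contra hf
    rw [integral_undef hf] at h
    linarith
  exact (intervalIntegral_tendsto_integral_Ioi a hint tendsto_id).eventually (eventually_gt_nhds h)

theorem stmt_4_general (p Cm B : ℝ) (hp2 : p < 2)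
    (ψ : ℝ → ℝ) (hψcont : Continuous ψ)
    (y : ℝ → ℝ) (hy : Differentiable ℝ y) (hynn : ∀ t, 0 ≤ t → 0 ≤ y t)
    (hineq : ∀ t, 0 ≤ t → 0 < y t →
      deriv y t ≤ -2 * Cm * ψ t * (y t) ^ (p - 1) + B * y t)
    (hstay : ∀ t, 0 ≤ t → y t = 0 → ∀ s, t ≤ s → y s = 0)
    (hinit : (y 0) ^ (2 - p) <
      2 * Cm * (2 - p) * ∫ s in Set.Ioi (0 : ℝ), ψ s * Real.exp (-B * (2 - p) * s)) :
    ∃ T > 0, ∀ t, T ≤ t → y t = 0 := by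
  set f : ℝ → ℝ := fun s ↦ (2 - p) * (2 * Cm * ψ s)
  have hf_integrand : ∀ s, f s * Real.exp (-(B * (2 - p)) * s)
      = 2 * Cm * (2 - p) * (ψ s * Real.exp (-B * (2 - p) * s)) := fun s ↦ by
    simp only [f, neg_mul]; ring
  simp only [← integral_const_mul, ← hf_integrand] at hinit
  obtain ⟨T, hT, hT0⟩ := ((eventually_lt_intervalIntegral_of_lt_integral_Ioi
    (Real.rpow_nonneg (hynn 0 le_rfl) _) hinit).and (eventually_gt_atTop 0)).exists
  suffices ∃ t ∈ Icc 0 T, y t = 0 by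
    obtain ⟨t, ht, hyt⟩ := this
    exact ⟨T, hT0, fun s hs ↦ hstay t ht.1 hyt s (ht.2.trans hs)⟩
  by_contra! hne
  have hpos : ∀ t ∈ Icc 0 T, 0 < y t := fun t ht ↦ (hynn t ht.1).lt_of_ne' (hne t ht)
  have hbernoulli : ∀ x ∈ Ioo 0 T,
      deriv y x * (2 - p) * y x ^ (2 - p - 1) ≤ -f x + B * (2 - p) * y x ^ (2 - p) := by
    intro x hx
    have hyx := hpos x (Ioo_subset_Icc_self hx)
    exact bernoulli_substitution_le (K := 2 * Cm * ψ x) hyx hp2.le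
      ((hineq x hx.1.le hyx).trans_eq (by ring))
  have hanti := antitoneOn_mul_exp_add_integral (by fun_prop)
    (fun x hx ↦ (hy x).hasDerivAt.rpow_const (Or.inl (hpos x hx).ne')) hbernoulli
    (left_mem_Icc.2 hT0.le) (right_mem_Icc.2 hT0.le) hT0.le
  have hyT : 0 ≤ y T ^ (2 - p) * Real.exp (-(B * (2 - p)) * T) :=
    mul_nonneg (Real.rpow_nonneg (hpos T (right_mem_Icc.2 hT0.le)).le _) (Real.exp_pos _).le
  simp only [intervalIntegral.integral_same, mul_zero, Real.exp_zero, mul_one, add_zero] at hanti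
  linarith

theorem stmt_4 (p Cm B : ℝ) (hp1 : 1 < p) (hp2 : p < 2) (hCm : 0 < Cm) (hB : 0 ≤ B)
    (ψ : ℝ → ℝ) (hψcont : Continuous ψ) (hψpos : ∀ t, 0 ≤ t → 0 ≤ ψ t)
    (y : ℝ → ℝ) (hy : Differentiable ℝ y) (hynn : ∀ t, 0 ≤ t → 0 ≤ y t)
    (hineq : ∀ t, 0 ≤ t → 0 < y t →
      deriv y t ≤ -2 * Cm * ψ t * (y t) ^ (p - 1) + B * y t)
    (hstay : ∀ t, 0 ≤ t → y t = 0 → ∀ s, t ≤ s → y s = 0)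
    (hinit : (y 0) ^ (2 - p) <
      2 * Cm * (2 - p) * ∫ s in Set.Ioi (0 : ℝ), ψ s * Real.exp (-B * (2 - p) * s)) :
    ∃ T > 0, ∀ t, T ≤ t → y t = 0 :=
  stmt_4_general p Cm B hp2 ψ hψcont y hy hynn hineq hstay hinit
end

section
/- Let v : [0, ∞) → ℝ be continuously differentiable and satisfy v'(t) ≤ b |v(t)|^{q−2} v(t) ((a/b) − |v(t)|^{r−q}) for all t ≥ 0, where a, b > 0 and 1 < q < r. If v(T) ≤ (a/b)^{1/(r−q)} for some T ≥ 0, then v(t) ≤ (a/b)^{1/(r−q)} for all t ≥ T. -/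
open Set

theorem le_of_deriv_nonpos_above {f : ℝ → ℝ} {T M : ℝ} (hcont : ContinuousOn f (Ici T))
    (hdiff : DifferentiableOn ℝ f (Ioi T)) (hT : f T ≤ M)
    (hderiv : ∀ x, T < x → M < f x → deriv f x ≤ 0) {t : ℝ} (ht : T ≤ t) : f t ≤ M := by
  by_contra! hft
  set S := Icc T t ∩ f ⁻¹' Iic M
  have hS : IsCompact S :=
    isCompact_Icc.of_isClosed_subset
      ((hcont.mono Icc_subset_Ici_self).preimage_isClosed_of_isClosed isClosed_Icc isClosed_Iic)
      inter_subset_left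
  -- `s` is the last time before `t` at which `f ≤ M`.
  obtain ⟨s, ⟨⟨hTs, hst⟩, hfs⟩, hs_greatest⟩ :=
    hS.exists_isGreatest ⟨T, ⟨left_mem_Icc.2 ht, hT⟩⟩
  have habove : ∀ x ∈ Ioo s t, M < f x := fun x hx => by
    by_contra! hfx
    exact (hs_greatest ⟨⟨hTs.trans hx.1.le, hx.2.le⟩, hfx⟩).not_gt hx.1
  have hanti : AntitoneOn f (Icc s t) := by
    refine antitoneOn_of_deriv_nonpos (convex_Icc s t)
      (hcont.mono fun x hx => hTs.trans hx.1) (hdiff.mono ?_) ?_ <;> rw [interior_Icc]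
    · exact fun x hx => hTs.trans_lt hx.1
    · exact fun x hx => hderiv x (hTs.trans_lt hx.1) (habove x hx)
  exact hft.not_ge ((hanti (left_mem_Icc.2 hst) (right_mem_Icc.2 hst) hst).trans hfs)

theorem mul_rpow_mul_sub_rpow_nonpos {b c p s x : ℝ} (hb : 0 ≤ b) (hc : 0 ≤ c) (hs : 0 < s)
    (hx : c ^ (1 / s) < x) : b * (|x| ^ p * x) * (c - |x| ^ s) ≤ 0 := by
  have hx0 : 0 < x := (Real.rpow_nonneg hc _).trans_lt hx
  rw [abs_of_pos hx0]
  have hcx : c < x ^ s := by rwa [one_div, Real.rpow_inv_lt_iff_of_pos hc hx0.le hs] at hx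
  exact mul_nonpos_of_nonneg_of_nonpos (by positivity) (sub_nonpos.2 hcx.le)

theorem stmt_5_general (a b q r : ℝ) (ha : 0 < a) (hb : 0 < b) (hqr : q < r)
    (v : ℝ → ℝ) (hv : ContDiff ℝ 1 v)
    (hineq : ∀ t, 0 ≤ t →
      deriv v t ≤ b * (|v t| ^ (q - 2) * v t) * (a / b - |v t| ^ (r - q)))
    (T : ℝ) (hT : 0 ≤ T) (hvT : v T ≤ (a / b) ^ (1 / (r - q))) :
    ∀ t, T ≤ t → v t ≤ (a / b) ^ (1 / (r - q)) := by
  intro t ht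
  refine le_of_deriv_nonpos_above hv.continuous.continuousOn
    (hv.differentiable one_ne_zero).differentiableOn hvT (fun x hTx hx => ?_) ht
  exact (hineq x (hT.trans hTx.le)).trans
    (mul_rpow_mul_sub_rpow_nonpos hb.le (div_pos ha hb).le (sub_pos.2 hqr) hx)

theorem stmt_5 (a b q r : ℝ) (ha : 0 < a) (hb : 0 < b) (hq : 1 < q) (hqr : q < r)
    (v : ℝ → ℝ) (hv : ContDiff ℝ 1 v)
    (hineq : ∀ t, 0 ≤ t →
      deriv v t ≤ b * (|v t| ^ (q - 2) * v t) * (a / b - |v t| ^ (r - q)))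
    (T : ℝ) (hT : 0 ≤ T) (hvT : v T ≤ (a / b) ^ (1 / (r - q))) :
    ∀ t, T ≤ t → v t ≤ (a / b) ^ (1 / (r - q)) :=
  stmt_5_general a b q r ha hb hqr v hv hineq T hT hvT
end

section
/- Let v : [0, ∞) → ℝ be continuously differentiable and satisfy v'(t) ≥ b |v(t)|^{q−2} v(t) ((a/b) − |v(t)|^{r−q}) for all t ≥ 0, where a, b > 0 and 1 < q < r. If v(T) ≥ (a/b)^{1/(r−q)} for some T ≥ 0, then v(t) ≥ (a/b)^{1/(r−q)} for all t ≥ T. -/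
/-!
Let `c = (a / b) ^ (1 / (r - q))`. For `0 < v < c` the right-hand side of the differential
inequality is positive, so `v` is strictly increasing whenever it lies in `(0, c)`. If `v` dropped
below `c` after `T`, then right after the last time `τ` at which `v ≥ c`, `v` would still be positive
(by continuity) but below `c`, hence increasing, and so above `v τ ≥ c`: a contradiction.
-/

open Set Topology

theorem exists_last_le_of_continuousOn {f : ℝ → ℝ} {T t c : ℝ} (hTt : T ≤ t)
    (hf : ContinuousOn f (Icc T t)) (hT : c ≤ f T) (ht : f t < c) :
    ∃ τ ∈ Ico T t, c ≤ f τ ∧ ∀ s ∈ Ioc τ t, f s < c := by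
  set S := Icc T t ∩ f ⁻¹' Ici c
  have hS_closed : IsClosed S := hf.preimage_isClosed_of_isClosed isClosed_Icc isClosed_Ici
  have hS_bdd : BddAbove S := ⟨t, fun s hs => hs.1.2⟩
  have hτ : sSup S ∈ S := hS_closed.csSup_mem ⟨T, ⟨le_rfl, hTt⟩, hT⟩ hS_bdd
  obtain ⟨⟨hTτ, hτt⟩, hcτ⟩ := hτ
  refine ⟨sSup S, ⟨hTτ, hτt.lt_of_ne ?_⟩, hcτ, ?_⟩
  · intro hτt_eq
    exact (ht.trans_le (hτt_eq ▸ hcτ)).false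
  · rintro s ⟨hτs, hst⟩
    by_contra! hcs
    exact (le_csSup hS_bdd ⟨⟨hTτ.trans hτs.le, hst⟩, hcs⟩).not_gt hτs

theorem le_of_deriv_pos_below {f : ℝ → ℝ} {T m c : ℝ} (hf : ContinuousOn f (Ici T))
    (hm : m < c) (hderiv : ∀ s, T < s → f s ∈ Ioo m c → 0 < deriv f s) (hT : c ≤ f T)
    {t : ℝ} (ht : T ≤ t) : c ≤ f t := by
  by_contra! hft
  obtain ⟨τ, ⟨hTτ, hτt⟩, hcτ, hbelow⟩ :=
    exists_last_le_of_continuousOn ht (hf.mono Icc_subset_Ici_self) hT hft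
  have hnear : ∀ᶠ s in 𝓝[≥] τ, m < f s :=
    ((hf τ hTτ).mono (Ici_subset_Ici.mpr hTτ)).eventually (lt_mem_nhds (hm.trans_le hcτ))
  obtain ⟨u, hτu, hu⟩ := mem_nhdsGE_iff_exists_Ico_subset.mp hnear
  obtain ⟨s, hτs, hs⟩ := exists_between (lt_min hτu hτt)
  have hmono : StrictMonoOn f (Icc τ s) := by
    refine strictMonoOn_of_deriv_pos (convex_Icc τ s)
      (hf.mono fun x hx => hTτ.trans hx.1) fun x hx => ?_
    rw [interior_Icc] at hx
    exact hderiv x (hTτ.trans_lt hx.1)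
      ⟨hu ⟨hx.1.le, hx.2.trans (hs.trans_le (min_le_left _ _))⟩,
        hbelow x ⟨hx.1, (hx.2.trans (hs.trans_le (min_le_right _ _))).le⟩⟩
  have hfτs := hmono (left_mem_Icc.mpr hτs.le) (right_mem_Icc.mpr hτs.le) hτs
  exact (hbelow s ⟨hτs, (hs.trans_le (min_le_right _ _)).le⟩).not_ge (hcτ.trans hfτs.le)

theorem logistic_rhs_pos {a b q r x : ℝ} (ha : 0 ≤ a) (hb : 0 < b) (hqr : q < r) (hx : 0 < x)
    (hxc : x < (a / b) ^ (1 / (r - q))) :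
    0 < b * (|x| ^ (q - 2) * x) * (a / b - |x| ^ (r - q)) := by
  rw [one_div, Real.lt_rpow_inv_iff_of_pos hx.le (by positivity) (sub_pos.mpr hqr)] at hxc
  rw [abs_of_pos hx]
  have hpow := Real.rpow_pos_of_pos hx (q - 2)
  have hgap := sub_pos.mpr hxc
  positivity

theorem stmt_6_general (a b q r : ℝ) (ha : 0 < a) (hb : 0 < b) (hqr : q < r)
    (v : ℝ → ℝ) (hv : ContDiff ℝ 1 v)
    (hineq : ∀ t, 0 ≤ t →
      deriv v t ≥ b * (|v t| ^ (q - 2) * v t) * (a / b - |v t| ^ (r - q)))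
    (T : ℝ) (hT : 0 ≤ T) (hvT : v T ≥ (a / b) ^ (1 / (r - q))) :
    ∀ t, T ≤ t → v t ≥ (a / b) ^ (1 / (r - q)) := by
  intro t ht
  refine le_of_deriv_pos_below hv.continuous.continuousOn
    (Real.rpow_pos_of_pos (div_pos ha hb) _) (fun s hTs hvs => ?_) hvT ht
  exact (logistic_rhs_pos ha.le hb hqr hvs.1 hvs.2).trans_le (hineq s (hT.trans hTs.le))

theorem stmt_6 (a b q r : ℝ) (ha : 0 < a) (hb : 0 < b) (hq : 1 < q) (hqr : q < r)
    (v : ℝ → ℝ) (hv : ContDiff ℝ 1 v)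
    (hineq : ∀ t, 0 ≤ t →
      deriv v t ≥ b * (|v t| ^ (q - 2) * v t) * (a / b - |v t| ^ (r - q)))
    (T : ℝ) (hT : 0 ≤ T) (hvT : v T ≥ (a / b) ^ (1 / (r - q))) :
    ∀ t, T ≤ t → v t ≥ (a / b) ^ (1 / (r - q)) :=
  stmt_6_general a b q r ha hb hqr v hv hineq T hT hvT
end

section
/- Let v : [0, ∞) → ℝ be continuously differentiable with v'(t) ≤ b v(t)^{q−1} ((a/b) − v(t)^{r−q}) whenever v(t) > 0, where a, b > 0 and 1 < q < r. Then lim sup_{t→∞} v(t) ≤ (a/b)^{1/(r−q)}. -/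
/-!
Above `C := (a / b) ^ (1 / (r - q))` the right-hand side is negative, and at any level
`K = C + ε` it is bounded by some `-δ < 0` on the whole half-line `{v ≥ K}`. Hence `v` must drop
below `K` in finite time, and once there it can never cross `K` again, because its derivative is
negative on `{v = K}`. So `v ≤ C + ε` eventually, for every `ε > 0`.
-/

open Filter Set

section Barrier

variable {f : ℝ → ℝ} {s K δ : ℝ}

theorem exists_ge_le_of_deriv_le_neg (hf : Differentiable ℝ f) (hδ : 0 < δ)
    (h : ∀ t, s ≤ t → K ≤ f t → deriv f t ≤ -δ) : ∃ t, s ≤ t ∧ f t ≤ K := by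
  by_contra! hgt
  have hslope : ∀ t, s ≤ t → f t - f s ≤ -δ * (t - s) :=
    fun t ht => (convex_Ici s).image_sub_le_mul_sub_of_deriv_le hf.continuous.continuousOn
      hf.differentiableOn (fun x hx => h x (interior_subset hx) (hgt x (interior_subset hx)).le)
      s self_mem_Ici t ht ht
  set T := s + (f s - K) / δ
  have hsT : s ≤ T := le_add_of_nonneg_right (div_nonneg (sub_nonneg.2 (hgt s le_rfl).le) hδ.le)
  have hfT := hslope T hsT
  have : δ * (T - s) = f s - K := by simp only [T, add_sub_cancel_left]; field_simp
  linarith [hgt T hsT]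

theorem image_le_of_deriv_neg_of_eq (hf : Differentiable ℝ f) (hs : f s ≤ K)
    (h : ∀ t, s ≤ t → f t = K → deriv f t < 0) {t : ℝ} (ht : s ≤ t) : f t ≤ K :=
  image_le_of_deriv_right_lt_deriv_boundary (B := fun _ => K) (B' := fun _ => 0)
    hf.continuous.continuousOn (fun x _ => (hf x).hasDerivAt.hasDerivWithinAt) hs
    (fun _ => hasDerivAt_const _ _) (fun x hx => h x hx.1) ⟨ht, le_rfl⟩

theorem eventually_le_of_deriv_le_neg (hf : Differentiable ℝ f) (hδ : 0 < δ)
    (h : ∀ t, s ≤ t → K ≤ f t → deriv f t ≤ -δ) : ∀ᶠ t in atTop, f t ≤ K := by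
  obtain ⟨t₀, hst₀, hft₀⟩ := exists_ge_le_of_deriv_le_neg hf hδ h
  refine eventually_atTop.2 ⟨t₀, fun t ht => image_le_of_deriv_neg_of_eq hf hft₀ ?_ ht⟩
  exact fun t ht hfK => (h t (hst₀.trans ht) hfK.ge).trans_lt (neg_neg_of_pos hδ)

end Barrier

theorem antitoneOn_mul_rpow_mul_sub_rpow {b c p s K : ℝ} (hb : 0 ≤ b) (hp : 0 ≤ p) (hs : 0 ≤ s)
    (hK : 0 < K) (hcK : c ≤ K ^ s) :
    AntitoneOn (fun x => b * x ^ p * (c - x ^ s)) (Ici K) := by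
  intro x hx y _ hxy
  have hx0 : 0 < x := hK.trans_le hx
  have hpow_p : x ^ p ≤ y ^ p := Real.rpow_le_rpow hx0.le hxy hp
  have hpow_s : x ^ s ≤ y ^ s := Real.rpow_le_rpow hx0.le hxy hs
  have hcx : c - x ^ s ≤ 0 := sub_nonpos.2 (hcK.trans (Real.rpow_le_rpow hK.le hx hs))
  have hxp : 0 ≤ x ^ p := Real.rpow_nonneg hx0.le p
  have : y ^ p * (c - y ^ s) ≤ x ^ p * (c - x ^ s) := by nlinarith
  simpa only [mul_assoc] using mul_le_mul_of_nonneg_left this hb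

/-- If `u → -∞` along `l`, then `limsup u l` is the `sInf` of a set unbounded below, i.e. the junk
value `0`. -/
theorem Real.limsup_le_of_forall_pos_eventually_le {α : Type*} {l : Filter α} {u : α → ℝ} {C : ℝ}
    (hC : 0 ≤ C) (h : ∀ ε > 0, ∀ᶠ x in l, u x ≤ C + ε) : limsup u l ≤ C := by
  rw [limsup_eq]
  by_cases hbdd : BddBelow {x | ∀ᶠ t in l, u t ≤ x}
  · exact le_of_forall_pos_le_add fun ε hε => csInf_le hbdd (h ε hε)
  · rwa [Real.sInf_of_not_bddBelow hbdd]

theorem stmt_7 (a b q r : ℝ) (ha : 0 < a) (hb : 0 < b) (hq : 1 < q) (hqr : q < r)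
    (v : ℝ → ℝ) (hv : ContDiff ℝ 1 v)
    (hineq : ∀ t, 0 ≤ t → 0 < v t →
      deriv v t ≤ b * (v t) ^ (q - 1) * (a / b - (v t) ^ (r - q))) :
    Filter.limsup v Filter.atTop ≤ (a / b) ^ (1 / (r - q)) := by
  have hab : 0 < a / b := div_pos ha hb
  have hrq : 0 < r - q := sub_pos.2 hqr
  set C := (a / b) ^ (1 / (r - q))
  have hC : 0 < C := Real.rpow_pos_of_pos hab _
  have hCpow : C ^ (r - q) = a / b := by
    simp only [C, one_div]
    exact Real.rpow_inv_rpow hab.le hrq.ne'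
  refine Real.limsup_le_of_forall_pos_eventually_le hC.le fun ε hε => ?_
  have hK : 0 < C + ε := by linarith
  have hKpow : a / b < (C + ε) ^ (r - q) := hCpow ▸ Real.rpow_lt_rpow hC.le (by linarith) hrq
  have hδ : 0 < -(b * (C + ε) ^ (q - 1) * (a / b - (C + ε) ^ (r - q))) :=
    neg_pos.2 (mul_neg_of_pos_of_neg (mul_pos hb (Real.rpow_pos_of_pos hK _)) (by linarith))
  refine eventually_le_of_deriv_le_neg (s := 0) (hv.differentiable one_ne_zero) hδ
    fun t ht hKv => ?_
  rw [neg_neg]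
  exact (hineq t ht (hK.trans_le hKv)).trans <|
    antitoneOn_mul_rpow_mul_sub_rpow hb.le (sub_pos.2 hq).le hrq.le hK hKpow.le self_mem_Ici hKv
      hKv
end

section
/- Let a, b > 0, 1 < q < r, set C := (a/b)^{1/(r−q)}, and let v : [T, ∞) → ℝ be continuously differentiable with v(t) > C for all t ≥ T and v'(t) ≤ −b v(t)^{q−1} (v(t)^{r−q} − C^{r−q}) for all t ≥ T. Then for all t ≥ T, |v(t) − C| ≤ |v(T) − C| exp(−b (r−q) C^{q−1} ξ₀ (t − T)), where ξ₀ = C^{r−q−1} if r − q ≥ 1 and ξ₀ = v(T)^{r−q−1} if r − q < 1. -/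
/-!
Since `v > C` and the right-hand side of the differential inequality is nonpositive there, `v`
decreases on `[T, ∞)`. By the mean value theorem, `v^(r-q) - C^(r-q) = (r-q) c^(r-q-1) (v - C)`
for some `c ∈ (C, v(t)) ⊆ (C, v(T))`, and `ξ₀` is a lower bound for `c^(r-q-1)` in both cases
(`x ↦ x^(r-q-1)` is increasing when `r - q ≥ 1` and decreasing otherwise). Together with
`v^(q-1) ≥ C^(q-1)` this linearises the inequality to `(v - C)' ≤ -λ (v - C)` with
`λ = b (r-q) C^(q-1) ξ₀`, and Grönwall's inequality gives the exponential decay.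
-/

open Set Real

theorem le_mul_exp_of_deriv_le_mul {u : ℝ → ℝ} {K T : ℝ}
    (hu : ∀ t, T ≤ t → DifferentiableAt ℝ u t) (bound : ∀ t, T ≤ t → deriv u t ≤ K * u t)
    {t : ℝ} (ht : T ≤ t) : u t ≤ u T * exp (K * (t - T)) := by
  have hgronwall := le_gronwallBound_of_liminf_deriv_right_le (f' := deriv u) (ε := 0)
    (fun x hx => (hu x hx.1).continuousAt.continuousWithinAt)
    (fun x hx _ hr => (hu x hx.1).hasDerivAt.hasDerivWithinAt.liminf_right_slope_le hr)
    le_rfl (fun x hx => by simpa using bound x hx.1) t ⟨ht, le_rfl⟩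
  rwa [gronwallBound_ε0] at hgronwall

theorem mul_mul_sub_le_rpow_sub_rpow {x y s ξ : ℝ} (hx : 0 < x) (hxy : x < y)
    (hξ : ∀ c ∈ Ioo x y, ξ ≤ c ^ (s - 1)) (hs : 0 ≤ s) : s * ξ * (y - x) ≤ y ^ s - x ^ s := by
  obtain ⟨c, hc, hslope⟩ := exists_hasDerivAt_eq_slope (fun z => z ^ s)
    (fun z => s * z ^ (s - 1)) hxy
    (fun z hz => (continuousAt_rpow_const z s (Or.inl (hx.trans_le hz.1).ne')).continuousWithinAt)
    (fun z hz => hasDerivAt_rpow_const (Or.inl (hx.trans hz.1).ne'))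
  rw [eq_div_iff (sub_pos.mpr hxy).ne'] at hslope
  rw [← hslope]
  gcongr
  exact hξ c hc

theorem rpow_mul_rpow_sub_rpow_nonneg {C y p s : ℝ} (hC : 0 ≤ C) (hCy : C ≤ y) (hs : 0 ≤ s) :
    0 ≤ y ^ p * (y ^ s - C ^ s) :=
  mul_nonneg (rpow_nonneg (hC.trans hCy) p) (sub_nonneg.mpr (rpow_le_rpow hC hCy hs))

theorem neg_mul_rpow_mul_rpow_sub_rpow_le {b C y p s ξ : ℝ} (hb : 0 ≤ b) (hC : 0 < C)
    (hCy : C < y) (hp : 0 ≤ p) (hs : 0 ≤ s) (hξ : ∀ c ∈ Ioo C y, ξ ≤ c ^ (s - 1)) :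
    -b * y ^ p * (y ^ s - C ^ s) ≤ -b * s * C ^ p * ξ * (y - C) := by
  have hmvt := mul_mul_sub_le_rpow_sub_rpow hC hCy hξ hs
  have hpow : C ^ p ≤ y ^ p := rpow_le_rpow hC.le hCy.le hp
  have hdiff : 0 ≤ y ^ s - C ^ s := sub_nonneg.mpr (rpow_le_rpow hC.le hCy.le hs)
  have : b * C ^ p * (s * ξ * (y - C)) ≤ b * y ^ p * (y ^ s - C ^ s) :=
    calc b * C ^ p * (s * ξ * (y - C)) ≤ b * C ^ p * (y ^ s - C ^ s) := by gcongr
      _ ≤ b * y ^ p * (y ^ s - C ^ s) := by gcongr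
  linarith

theorem stmt_8 (a b q r T : ℝ) (ha : 0 < a) (hb : 0 < b) (hq : 1 < q) (hqr : q < r)
    (v : ℝ → ℝ) (hv : ContDiff ℝ 1 v)
    (C : ℝ) (hC : C = (a / b) ^ (1 / (r - q)))
    (hvC : ∀ t, T ≤ t → C < v t)
    (hineq : ∀ t, T ≤ t →
      deriv v t ≤ -b * (v t) ^ (q - 1) * ((v t) ^ (r - q) - C ^ (r - q)))
    (ξ₀ : ℝ) (hξ₀ : ξ₀ = if 1 ≤ r - q then C ^ (r - q - 1) else (v T) ^ (r - q - 1)) :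
    ∀ t, T ≤ t →
      |v t - C| ≤ |v T - C| * Real.exp (-b * (r - q) * C ^ (q - 1) * ξ₀ * (t - T)) := by
  have hC0 : 0 < C := hC ▸ rpow_pos_of_pos (div_pos ha hb) _
  have hs : 0 ≤ r - q := by linarith
  have hvdiff : Differentiable ℝ v := hv.differentiable one_ne_zero
  have hanti : AntitoneOn v (Ici T) := by
    refine antitoneOn_of_deriv_nonpos (convex_Ici T) hvdiff.continuous.continuousOn
      hvdiff.differentiableOn fun t ht => ?_
    rw [interior_Ici] at ht
    have := mul_nonneg hb.le
      (rpow_mul_rpow_sub_rpow_nonneg (p := q - 1) hC0.le (hvC t ht.le).le hs)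
    linarith [hineq t ht.le]
  have hξ : ∀ t, T ≤ t → ∀ c ∈ Ioo C (v t), ξ₀ ≤ c ^ (r - q - 1) := by
    intro t ht c hc
    rw [hξ₀]
    split_ifs with h
    · exact rpow_le_rpow hC0.le hc.1.le (by linarith)
    · exact rpow_le_rpow_of_nonpos (hC0.trans hc.1)
        (hc.2.le.trans (hanti self_mem_Ici ht ht)) (by linarith)
  intro t ht
  have hdecay := le_mul_exp_of_deriv_le_mul (u := fun t => v t - C)
    (fun t _ => (hvdiff t).sub_const C)
    (fun t ht => by
      simpa only [deriv_sub_const] using (hineq t ht).trans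
        (neg_mul_rpow_mul_rpow_sub_rpow_le hb.le hC0 (hvC t ht) (by linarith) hs (hξ t ht)))
    ht
  rwa [abs_of_pos (sub_pos.mpr (hvC t ht)), abs_of_pos (sub_pos.mpr (hvC T le_rfl))]
end

section
/- Let a, b > 0, 1 < q < r, set C := (a/b)^{1/(r−q)}, and let v : [T, ∞) → ℝ be continuously differentiable with 0 < v(t) < C for all t ≥ T and v'(t) ≥ b v(t)^{q−1} (C^{r−q} − v(t)^{r−q}) for all t ≥ T. Then for all t ≥ T, |v(t) − C| ≤ |v(T) − C| exp(−b (r−q) v(T)^{q−1} ξ₁ (t − T)), where ξ₁ = v(T)^{r−q−1} if r − q ≥ 1 and ξ₁ = C^{r−q−1} if r − q < 1. -/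
/-!
The right-hand side of the differential inequality is nonnegative while `0 < v < C`, so `v` is
nondecreasing on `[T, ∞)` and `v T ≤ v t < C`. On that range the tangent-line bounds for
`x ↦ x ^ (r - q)` (at `v t` when `r - q ≥ 1`, where the power is convex; at `C` when `r - q < 1`,
where it is concave) give `C ^ (r - q) - v t ^ (r - q) ≥ (r - q) ξ₁ (C - v t)`, and
`v t ^ (q - 1) ≥ v T ^ (q - 1)`. Hence `(C - v)' ≤ -λ (C - v)` with
`λ = b (r - q) v T ^ (q - 1) ξ₁`, and Grönwall's inequality gives the exponential decay.
-/

open Real Set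

namespace Real

theorem mul_rpow_sub_one_mul_sub_le_rpow_sub_rpow {s x y : ℝ} (hs : 1 ≤ s) (hx : 0 < x)
    (hy : 0 ≤ y) : s * x ^ (s - 1) * (y - x) ≤ y ^ s - x ^ s := by
  have h := one_add_mul_self_le_rpow_one_add (s := y / x - 1)
    (by linarith [div_nonneg hy hx.le]) hs
  rw [add_sub_cancel, div_rpow hy hx.le, le_div_iff₀ (rpow_pos_of_pos hx s)] at h
  have h_expand : s * x ^ (s - 1) * (y - x) = (1 + s * (y / x - 1)) * x ^ s - x ^ s := by
    rw [rpow_sub_one hx.ne']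
    field_simp
    ring
  linarith

theorem mul_rpow_sub_one_mul_sub_le_rpow_sub_rpow_of_le_one {s x y : ℝ} (hs₀ : 0 ≤ s)
    (hs₁ : s ≤ 1) (hx : 0 ≤ x) (hy : 0 < y) : s * y ^ (s - 1) * (y - x) ≤ y ^ s - x ^ s := by
  have h := rpow_one_add_le_one_add_mul_self (s := x / y - 1)
    (by linarith [div_nonneg hx hy.le]) hs₀ hs₁
  rw [add_sub_cancel, div_rpow hx hy.le, div_le_iff₀ (rpow_pos_of_pos hy s)] at h
  have h_expand : s * y ^ (s - 1) * (y - x) = y ^ s - (1 + s * (x / y - 1)) * y ^ s := by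
    rw [rpow_sub_one hy.ne']
    field_simp
    ring
  linarith

theorem mul_ite_mul_sub_le_rpow_sub_rpow {s x y C : ℝ} (hs : 0 < s) (hy : 0 < y) (hyx : y ≤ x)
    (hxC : x ≤ C) :
    s * (if 1 ≤ s then y ^ (s - 1) else C ^ (s - 1)) * (C - x) ≤ C ^ s - x ^ s := by
  have hx : 0 < x := hy.trans_le hyx
  split_ifs with h
  · calc s * y ^ (s - 1) * (C - x) ≤ s * x ^ (s - 1) * (C - x) := by gcongr
      _ ≤ C ^ s - x ^ s := mul_rpow_sub_one_mul_sub_le_rpow_sub_rpow h hx (hx.le.trans hxC)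
  · exact mul_rpow_sub_one_mul_sub_le_rpow_sub_rpow_of_le_one hs.le (not_le.1 h).le hx.le
      (hx.trans_le hxC)

end Real

theorem sub_le_mul_exp_of_mul_sub_le_deriv {v : ℝ → ℝ} {C l T : ℝ} (hv : Differentiable ℝ v)
    (h : ∀ t, T ≤ t → l * (C - v t) ≤ deriv v t) (t : ℝ) (ht : T ≤ t) :
    C - v t ≤ (C - v T) * exp (-l * (t - T)) := by
  have hf : ∀ x, HasDerivAt (fun t ↦ C - v t) (-deriv v x) x :=
    fun x ↦ (hv x).hasDerivAt.const_sub C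
  have := le_gronwallBound_of_liminf_deriv_right_le (f := fun t ↦ C - v t) (b := t) (ε := 0)
    (K := -l) (continuous_const.sub hv.continuous).continuousOn
    (fun x _ _ hr ↦ (hf x).hasDerivWithinAt.liminf_right_slope_le hr) le_rfl
    (fun x hx ↦ by linarith [h x hx.1]) t ⟨ht, le_rfl⟩
  rwa [gronwallBound_ε0] at this

theorem stmt_9_general (b q r T : ℝ) (hb : 0 < b) (hq : 1 < q) (hqr : q < r)
    (v : ℝ → ℝ) (hv : ContDiff ℝ 1 v)
    (C : ℝ)
    (hvC : ∀ t, T ≤ t → 0 < v t ∧ v t < C)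
    (hineq : ∀ t, T ≤ t →
      deriv v t ≥ b * (v t) ^ (q - 1) * (C ^ (r - q) - (v t) ^ (r - q)))
    (ξ₁ : ℝ) (hξ₁ : ξ₁ = if 1 ≤ r - q then (v T) ^ (r - q - 1) else C ^ (r - q - 1)) :
    ∀ t, T ≤ t →
      |v t - C| ≤ |v T - C| * Real.exp (-b * (r - q) * (v T) ^ (q - 1) * ξ₁ * (t - T)) := by
  intro t ht
  have hs : 0 < r - q := sub_pos.2 hqr
  have hvd : Differentiable ℝ v := hv.differentiable one_ne_zero
  have hmono : MonotoneOn v (Ici T) := by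
    refine monotoneOn_of_deriv_nonneg (convex_Ici T) hvd.continuous.continuousOn
      hvd.differentiableOn fun x hx ↦ ?_
    rw [interior_Ici] at hx
    obtain ⟨hx₀, hxC⟩ := hvC x hx.le
    have hpow := rpow_le_rpow hx₀.le hxC.le hs.le
    exact le_trans (mul_nonneg (by positivity) (sub_nonneg.2 hpow)) (hineq x hx.le)
  have hrate : ∀ x, T ≤ x → b * (r - q) * v T ^ (q - 1) * ξ₁ * (C - v x) ≤ deriv v x := by
    intro x hx
    have hTx : v T ≤ v x := hmono self_mem_Ici hx hx
    obtain ⟨hx₀, hxC⟩ := hvC x hx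
    have hvT₀ := (hvC T le_rfl).1
    have hpow := rpow_le_rpow hx₀.le hxC.le hs.le
    calc _ = b * v T ^ (q - 1) * ((r - q) * ξ₁ * (C - v x)) := by ring
      _ ≤ b * v T ^ (q - 1) * (C ^ (r - q) - v x ^ (r - q)) := by
        rw [hξ₁]
        gcongr
        exact mul_ite_mul_sub_le_rpow_sub_rpow hs hvT₀ hTx hxC.le
      _ ≤ b * v x ^ (q - 1) * (C ^ (r - q) - v x ^ (r - q)) := by gcongr
      _ ≤ deriv v x := hineq x hx
  have hdecay := sub_le_mul_exp_of_mul_sub_le_deriv hvd hrate t ht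
  rw [abs_sub_comm, abs_of_pos (sub_pos.2 (hvC t ht).2), abs_sub_comm,
    abs_of_pos (sub_pos.2 (hvC T le_rfl).2)]
  convert hdecay using 3
  ring

theorem stmt_9 (a b q r T : ℝ) (ha : 0 < a) (hb : 0 < b) (hq : 1 < q) (hqr : q < r)
    (v : ℝ → ℝ) (hv : ContDiff ℝ 1 v)
    (C : ℝ) (hC : C = (a / b) ^ (1 / (r - q)))
    (hvC : ∀ t, T ≤ t → 0 < v t ∧ v t < C)
    (hineq : ∀ t, T ≤ t →
      deriv v t ≥ b * (v t) ^ (q - 1) * (C ^ (r - q) - (v t) ^ (r - q)))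
    (ξ₁ : ℝ) (hξ₁ : ξ₁ = if 1 ≤ r - q then (v T) ^ (r - q - 1) else C ^ (r - q - 1)) :
    ∀ t, T ≤ t →
      |v t - C| ≤ |v T - C| * Real.exp (-b * (r - q) * (v T) ^ (q - 1) * ξ₁ * (t - T)) :=
  stmt_9_general b q r T hb hq hqr v hv C hvC hineq ξ₁ hξ₁
end

section
/- Let ψ_R(s) = (1 + s²)^{−β/2} for β > 0, and let x_i, v_i : [0, ∞) → ℝ^d be differentiable with x_i' = v_i. Then for all i, j and t ≥ 0, ψ_R(‖x_j(t) − x_i(t)‖) ≥ [ ψ_R(‖x_j(0) − x_i(0)‖)^{−1/β} + ∫₀ᵗ ‖v_j(s) − v_i(s)‖ ds ]^{−β}. -/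
/-!
Since `ψ_R(s)^(-1/β) = √(1 + s²)`, and `y ↦ √(1 + ‖y‖²)` is `1`-Lipschitz, `ψ_R^(-1/β)` of the
relative position grows at most by the displacement `‖y(t) - y(0)‖ ≤ ∫₀ᵗ ‖y'‖`; raising to the
power `-β` reverses the inequality.
-/

open Real

theorem sqrt_one_add_norm_sq_le_add_norm_sub {E : Type*} [SeminormedAddCommGroup E] (x y : E) :
    √(1 + ‖x‖ ^ 2) ≤ √(1 + ‖y‖ ^ 2) + ‖x - y‖ := by
  have htri : ‖x‖ ≤ ‖y‖ + ‖x - y‖ := norm_le_insert' x y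
  have hy : ‖y‖ ≤ √(1 + ‖y‖ ^ 2) := le_sqrt_of_sq_le (by linarith)
  have hsq : √(1 + ‖y‖ ^ 2) ^ 2 = 1 + ‖y‖ ^ 2 := sq_sqrt (by positivity)
  rw [sqrt_le_left (by positivity)]
  nlinarith [norm_nonneg (x - y), norm_nonneg x]

theorem norm_sub_le_integral_norm_of_hasDerivAt {E : Type*} [NormedAddCommGroup E]
    [NormedSpace ℝ E] {f f' : ℝ → E} {a b : ℝ} (hf : ∀ t, HasDerivAt f (f' t) t)
    (hf' : Continuous f') (hab : a ≤ b) :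
    ‖f b - f a‖ ≤ ∫ t in a..b, ‖f' t‖ :=
  norm_sub_le_integral_of_norm_deriv_le_of_le hab
    (fun t _ ↦ (hf t).continuousAt.continuousWithinAt)
    (fun t _ ↦ (hf t).differentiableAt.differentiableWithinAt)
    (.of_forall fun t _ ↦ (hf t).deriv ▸ le_rfl)
    (hf'.norm.intervalIntegrable a b)

theorem rpow_neg_div_two_eq_sqrt_rpow_neg {a : ℝ} (ha : 0 ≤ a) (β : ℝ) :
    a ^ (-(β / 2)) = √a ^ (-β) := by
  rw [sqrt_eq_rpow, ← rpow_mul ha]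
  ring_nf

theorem stmt_10 (d : ℕ) (β : ℝ) (hβ : 0 < β)
    (x₁ x₂ v₁ v₂ : ℝ → EuclideanSpace ℝ (Fin d))
    (hx₁ : ∀ t, HasDerivAt x₁ (v₁ t) t) (hx₂ : ∀ t, HasDerivAt x₂ (v₂ t) t)
    (hv₁ : Continuous v₁) (hv₂ : Continuous v₂)
    (ψR : ℝ → ℝ) (hψR : ∀ s, ψR s = (1 + s ^ 2) ^ (-(β / 2))) :
    ∀ t, 0 ≤ t →
      ψR ‖x₂ t - x₁ t‖ ≥
        ((ψR ‖x₂ 0 - x₁ 0‖) ^ (-(1 / β)) +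
          ∫ s in (0 : ℝ)..t, ‖v₂ s - v₁ s‖) ^ (-β) := by
  intro t ht
  have hψR' (s : ℝ) : ψR s = √(1 + s ^ 2) ^ (-β) :=
    (hψR s).trans (rpow_neg_div_two_eq_sqrt_rpow_neg (by positivity) β)
  have hψR_inv (s : ℝ) : ψR s ^ (-(1 / β)) = √(1 + s ^ 2) := by
    rw [hψR', show -(1 / β) = (-β)⁻¹ by rw [one_div, inv_neg],
      rpow_rpow_inv (sqrt_nonneg _) (neg_ne_zero.2 hβ.ne')]
  have hdisp : ‖(x₂ t - x₁ t) - (x₂ 0 - x₁ 0)‖ ≤ ∫ s in (0 : ℝ)..t, ‖v₂ s - v₁ s‖ :=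
    norm_sub_le_integral_norm_of_hasDerivAt (fun s ↦ (hx₂ s).sub (hx₁ s)) (hv₂.sub hv₁) ht
  rw [hψR', hψR_inv, ge_iff_le]
  refine rpow_le_rpow_of_nonpos (by positivity) ?_ (neg_nonpos.2 hβ.le)
  exact (sqrt_one_add_norm_sq_le_add_norm_sub _ _).trans (by gcongr)
end

section
/- Let ψ : [0,∞) → [0,∞), p > 1, and v ∈ ℝ^N with v_M = max_i v_i attained at index i₀ and v_m = min_i v_i attained at index i₁. Then (Δ_{p,ψ} v)_{i₀} − (Δ_{p,ψ} v)_{i₁} ≤ −2 ψ_min (v_M − v_m)^{p−1}, where ψ_min := min_{i,j} ψ(‖x_j − x_i‖) and Δ_{p,ψ} is the discrete p-Laplacian (Δ_{p,ψ} v)_i = Σ_j ψ(‖x_j − x_i‖)|v_j − v_i|^{p−2}(v_j − v_i). -/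
/-!
Only the two edge terms between the extremal nodes matter. At the maximum node `i₀` every term
`ψ(‖x_j - x_{i₀}‖) |v_j - v_{i₀}|^{p-2} (v_j - v_{i₀})` is nonpositive, so the Laplacian there is at
most its `j = i₁` term, `-ψ(‖x_{i₁} - x_{i₀}‖) (v_M - v_m)^{p-1}`. The minimum node is the mirror image,
via `v ↦ -v`, under which the Laplacian changes sign.
-/

open Finset

noncomputable def signedRpow (p t : ℝ) : ℝ := |t| ^ (p - 2) * t

lemma signedRpow_nonneg {p t : ℝ} (ht : 0 ≤ t) : 0 ≤ signedRpow p t :=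
  mul_nonneg (Real.rpow_nonneg (abs_nonneg t) _) ht

lemma signedRpow_neg (p t : ℝ) : signedRpow p (-t) = -signedRpow p t := by
  simp only [signedRpow, abs_neg, mul_neg]

lemma signedRpow_of_nonneg {p t : ℝ} (hp : p ≠ 1) (ht : 0 ≤ t) :
    signedRpow p t = t ^ (p - 1) := by
  have hp' : p - 2 + 1 ≠ 0 := by contrapose! hp; linarith
  rw [signedRpow, abs_of_nonneg ht, ← Real.rpow_add_one' ht hp']
  ring_nf

noncomputable def weightedPLaplacian {ι : Type*} [Fintype ι] (w : ι → ι → ℝ) (p : ℝ) (v : ι → ℝ)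
    (i : ι) : ℝ :=
  ∑ j, w i j * signedRpow p (v j - v i)

section

variable {ι : Type*} [Fintype ι] {w : ι → ι → ℝ} {p : ℝ} {v : ι → ℝ}

lemma weightedPLaplacian_neg (w : ι → ι → ℝ) (p : ℝ) (v : ι → ℝ) (i : ι) :
    weightedPLaplacian w p (-v) i = -weightedPLaplacian w p v i := by
  simp only [weightedPLaplacian, Pi.neg_apply, neg_sub_neg, ← neg_sub (v _) (v i), signedRpow_neg,
    mul_neg, sum_neg_distrib]

lemma mul_signedRpow_le_weightedPLaplacian_at_min (hw : ∀ i j, 0 ≤ w i j) {i₁ : ι}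
    (hi₁ : ∀ j, v i₁ ≤ v j) (k : ι) :
    w i₁ k * signedRpow p (v k - v i₁) ≤ weightedPLaplacian w p v i₁ :=
  single_le_sum (f := fun j ↦ w i₁ j * signedRpow p (v j - v i₁))
    (fun j _ ↦ mul_nonneg (hw i₁ j) (signedRpow_nonneg (sub_nonneg.2 (hi₁ j)))) (mem_univ k)

lemma weightedPLaplacian_le_mul_signedRpow_at_max (hw : ∀ i j, 0 ≤ w i j) {i₀ : ι}
    (hi₀ : ∀ j, v j ≤ v i₀) (k : ι) :
    weightedPLaplacian w p v i₀ ≤ w i₀ k * signedRpow p (v k - v i₀) := by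
  have h := mul_signedRpow_le_weightedPLaplacian_at_min (p := p) (v := -v) hw
    (fun j ↦ neg_le_neg (hi₀ j)) k
  rw [weightedPLaplacian_neg, Pi.neg_apply, Pi.neg_apply, neg_sub_neg, ← neg_sub,
    signedRpow_neg, mul_neg] at h
  exact neg_le_neg_iff.1 h

theorem weightedPLaplacian_max_sub_min_le (hw : ∀ i j, 0 ≤ w i j) (hp : p ≠ 1) {c : ℝ}
    (hc : ∀ i j, c ≤ w i j) {i₀ i₁ : ι} (hi₀ : ∀ j, v j ≤ v i₀) (hi₁ : ∀ j, v i₁ ≤ v j) :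
    weightedPLaplacian w p v i₀ - weightedPLaplacian w p v i₁ ≤
      -2 * c * (v i₀ - v i₁) ^ (p - 1) := by
  have hosc : 0 ≤ v i₀ - v i₁ := sub_nonneg.2 (hi₁ i₀)
  have hA : 0 ≤ (v i₀ - v i₁) ^ (p - 1) := Real.rpow_nonneg hosc _
  have hmax := weightedPLaplacian_le_mul_signedRpow_at_max (p := p) hw hi₀ i₁
  have hmin := mul_signedRpow_le_weightedPLaplacian_at_min (p := p) hw hi₁ i₀
  rw [← neg_sub, signedRpow_neg, signedRpow_of_nonneg hp hosc] at hmax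
  rw [signedRpow_of_nonneg hp hosc] at hmin
  nlinarith [mul_le_mul_of_nonneg_right (hc i₀ i₁) hA, mul_le_mul_of_nonneg_right (hc i₁ i₀) hA]

end

theorem stmt_14_general (N d : ℕ) (p : ℝ) (hp : 1 < p)
    (x : Fin N → EuclideanSpace ℝ (Fin d))
    (ψ : ℝ → ℝ) (hψ : ∀ s, 0 ≤ s → 0 ≤ ψ s)
    (v : Fin N → ℝ)
    (i₀ i₁ : Fin N) (hi₀ : ∀ j, v j ≤ v i₀) (hi₁ : ∀ j, v i₁ ≤ v j)
    (ψmin : ℝ) (hψmin : ∀ i j, ψmin ≤ ψ ‖x j - x i‖) :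
    (∑ j, ψ ‖x j - x i₀‖ * (|v j - v i₀| ^ (p - 2) * (v j - v i₀))) -
      (∑ j, ψ ‖x j - x i₁‖ * (|v j - v i₁| ^ (p - 2) * (v j - v i₁))) ≤
      -2 * ψmin * (v i₀ - v i₁) ^ (p - 1) :=
  weightedPLaplacian_max_sub_min_le (w := fun i j ↦ ψ ‖x j - x i‖)
    (fun _ _ ↦ hψ _ (norm_nonneg _)) hp.ne' hψmin hi₀ hi₁

theorem stmt_14 (N d : ℕ) (hN : 2 ≤ N) (p : ℝ) (hp : 1 < p)
    (x : Fin N → EuclideanSpace ℝ (Fin d))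
    (ψ : ℝ → ℝ) (hψ : ∀ s, 0 ≤ s → 0 ≤ ψ s)
    (v : Fin N → ℝ)
    (i₀ i₁ : Fin N) (hi₀ : ∀ j, v j ≤ v i₀) (hi₁ : ∀ j, v i₁ ≤ v j)
    (ψmin : ℝ) (hψmin0 : 0 ≤ ψmin) (hψmin : ∀ i j, ψmin ≤ ψ ‖x j - x i‖) :
    (∑ j, ψ ‖x j - x i₀‖ * (|v j - v i₀| ^ (p - 2) * (v j - v i₀))) -
      (∑ j, ψ ‖x j - x i₁‖ * (|v j - v i₁| ^ (p - 2) * (v j - v i₁))) ≤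
      -2 * ψmin * (v i₀ - v i₁) ^ (p - 1) :=
  stmt_14_general N d p hp x ψ hψ v i₀ i₁ hi₀ hi₁ ψmin hψmin
end

section
/- Let a, b > 0 and 2 ≤ q < r, and let v : [0, ∞) → ℝ^d be continuously differentiable with ⟨v(t), v'(t)⟩ ≤ b ‖v(t)‖^q ((a/b) − ‖v(t)‖^{r−q}) for all t ≥ 0, and suppose ‖v(t)‖ > 0 for all t ≥ 0. Then: (i) if ‖v(T)‖ ≤ (a/b)^{1/(r−q)} for some T, then ‖v(t)‖ ≤ (a/b)^{1/(r−q)} for all t ≥ T; (ii) lim sup_{t→∞} ‖v(t)‖ ≤ (a/b)^{1/(r−q)}. -/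
/-!
With `M = (a / b) ^ (1 / (r - q))`, the derivative `2 ⟪v, v'⟫` of `‖v‖²` is negative wherever
`‖v‖ > M`, so `‖v‖` can never cross a level `c ≥ M` upwards; this is (i). For `c > M`, as long as
`‖v‖ ≥ c` the bound `b x ^ q (a / b - x ^ (r - q))` is at most its value at `x = c`, a negative
constant, so `‖v‖²` would decrease at a linear rate forever if `‖v‖` stayed above `c`. Hence `‖v‖`
drops to `c` at some time, and then stays below it by (i), so `limsup ‖v‖ ≤ c` for every `c > M`.
-/

open Filter Set

theorem le_of_hasDerivAt_neg_above {f f' : ℝ → ℝ} {c T t : ℝ}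
    (hf : ∀ x, T ≤ x → HasDerivAt f (f' x) x) (hf' : ∀ x, T ≤ x → c < f x → f' x < 0)
    (hT : f T ≤ c) (ht : T ≤ t) : f t ≤ c := by
  -- `f` cannot touch the barrier `c + ε`, where it would have to be increasing.
  refine le_of_forall_pos_le_add fun ε hε => ?_
  refine image_le_of_deriv_right_lt_deriv_boundary' (B := fun _ => c + ε) (B' := 0)
    (fun x hx => (hf x hx.1).continuousAt.continuousWithinAt)
    (fun x hx => (hf x hx.1).hasDerivWithinAt) (by linarith) continuousOn_const
    (fun _ _ => hasDerivWithinAt_const _ _ _) (fun x hx hfx => hf' x hx.1 (by linarith))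
    ⟨ht, le_rfl⟩

theorem exists_lt_of_hasDerivAt_le_neg {f f' : ℝ → ℝ} {T ε : ℝ} (hε : 0 < ε)
    (hf : ∀ x, T ≤ x → HasDerivAt f (f' x) x) (hf' : ∀ x, T ≤ x → f' x ≤ -ε) (y : ℝ) :
    ∃ t, T ≤ t ∧ f t < y := by
  have hlin : ∀ t, T ≤ t → f t ≤ f T - ε * (t - T) := fun t ht =>
    image_le_of_deriv_right_le_deriv_boundary (B := fun x => f T - ε * (x - T)) (B' := fun _ => -ε)
      (fun x hx => (hf x hx.1).continuousAt.continuousWithinAt)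
      (fun x hx => (hf x hx.1).hasDerivWithinAt) (by simp) (by fun_prop)
      (fun x _ => by
        simpa using
          ((((hasDerivAt_id x).sub_const T).const_mul ε).const_sub (f T)).hasDerivWithinAt)
      (fun x hx => hf' x hx.1) ⟨ht, le_rfl⟩
  have hd : 0 ≤ |f T - y| / ε + 1 := by positivity
  refine ⟨T + (|f T - y| / ε + 1), le_add_of_nonneg_right hd, ?_⟩
  calc f _ ≤ f T - ε * (|f T - y| / ε + 1) := by
        simpa using hlin _ (le_add_of_nonneg_right hd)
    _ = f T - |f T - y| - ε := by field_simp; ring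
    _ < y := by linarith [le_abs_self (f T - y)]

theorem antitoneOn_rpow_mul_sub_rpow {p q s c : ℝ} (hp : 0 ≤ p) (hq : 0 ≤ q) (hc : 0 ≤ c)
    (hs : s ≤ c ^ p) : AntitoneOn (fun x : ℝ => x ^ q * (s - x ^ p)) (Ici c) := by
  intro x hx y _ hxy
  have hx0 : 0 ≤ x := hc.trans hx
  have hsx : s - x ^ p ≤ 0 := by linarith [Real.rpow_le_rpow hc (show c ≤ x from hx) hp]
  calc y ^ q * (s - y ^ p) ≤ y ^ q * (s - x ^ p) := by
        gcongr
        exact Real.rpow_nonneg (hx0.trans hxy) q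
    _ ≤ x ^ q * (s - x ^ p) := mul_le_mul_of_nonpos_right (Real.rpow_le_rpow hx0 hxy hq) hsx

section InnerProductSpace

variable {E : Type*} [NormedAddCommGroup E] [InnerProductSpace ℝ E] {v : ℝ → E}

theorem norm_le_of_inner_deriv_neg_above (hv : Differentiable ℝ v) {c T t : ℝ} (hc : 0 ≤ c)
    (hv' : ∀ x, T ≤ x → c < ‖v x‖ → inner ℝ (v x) (deriv v x) < 0) (hT : ‖v T‖ ≤ c)
    (ht : T ≤ t) : ‖v t‖ ≤ c := by
  have hsq : ‖v t‖ ^ 2 ≤ c ^ 2 := by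
    refine le_of_hasDerivAt_neg_above (f := (‖v ·‖ ^ 2)) (fun x _ => (hv x).hasDerivAt.norm_sq)
      (fun x hx hcx => ?_) (pow_le_pow_left₀ (norm_nonneg _) hT 2) ht
    linarith [hv' x hx (lt_of_pow_lt_pow_left₀ 2 (norm_nonneg _) hcx)]
  exact (pow_le_pow_iff_left₀ (norm_nonneg _) hc two_ne_zero).1 hsq

theorem exists_norm_le_of_inner_deriv_le_neg (hv : Differentiable ℝ v) {c T ε : ℝ} (hε : 0 < ε)
    (hv' : ∀ x, T ≤ x → c < ‖v x‖ → inner ℝ (v x) (deriv v x) ≤ -ε) :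
    ∃ t, T ≤ t ∧ ‖v t‖ ≤ c := by
  by_contra! h
  obtain ⟨t, ht, hneg⟩ := exists_lt_of_hasDerivAt_le_neg (f := (‖v ·‖ ^ 2))
    (by positivity : 0 < 2 * ε) (fun x _ => (hv x).hasDerivAt.norm_sq)
    (fun x hx => by linarith [hv' x hx (h x hx)]) 0
  exact hneg.not_ge (by positivity)

end InnerProductSpace

theorem stmt_15_general (d : ℕ) (a b q r : ℝ) (ha : 0 < a) (hb : 0 < b)
    (hq : 2 ≤ q) (hqr : q < r)
    (v : ℝ → EuclideanSpace ℝ (Fin d)) (hv : ContDiff ℝ 1 v)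
    (hineq : ∀ t, 0 ≤ t →
      (inner ℝ (v t) (deriv v t) : ℝ) ≤ b * ‖v t‖ ^ q * (a / b - ‖v t‖ ^ (r - q))) :
    (∀ T, 0 ≤ T → ‖v T‖ ≤ (a / b) ^ (1 / (r - q)) →
      ∀ t, T ≤ t → ‖v t‖ ≤ (a / b) ^ (1 / (r - q))) ∧
    Filter.limsup (fun t => ‖v t‖) Filter.atTop ≤ (a / b) ^ (1 / (r - q)) := by
  have hab : 0 < a / b := div_pos ha hb
  have hrq : 0 < r - q := sub_pos.2 hqr
  set M := (a / b) ^ (1 / (r - q))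
  have hM0 : 0 ≤ M := by positivity
  have hvd : Differentiable ℝ v := hv.differentiable one_ne_zero
  have hcab : ∀ c, M < c → a / b < c ^ (r - q) := fun c hc =>
    (Real.rpow_inv_lt_iff_of_pos hab.le (hM0.trans hc.le) hrq).1 (by rwa [← one_div])
  have hneg : ∀ c, M < c → b * c ^ q * (a / b - c ^ (r - q)) < 0 := fun c hc =>
    mul_neg_of_pos_of_neg (mul_pos hb (Real.rpow_pos_of_pos (hM0.trans_lt hc) q))
      (sub_neg.2 (hcab c hc))
  have hforce : ∀ c, M < c → ∀ t, 0 ≤ t → c ≤ ‖v t‖ →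
      inner ℝ (v t) (deriv v t) ≤ b * c ^ q * (a / b - c ^ (r - q)) := by
    intro c hc t ht hct
    have h := antitoneOn_rpow_mul_sub_rpow (q := q) hrq.le (by linarith only [hq])
      (hM0.trans hc.le) (hcab c hc).le (mem_Ici.2 le_rfl) hct hct
    simp only [mul_assoc] at hineq ⊢
    exact (hineq t ht).trans (mul_le_mul_of_nonneg_left h hb.le)
  have hinv : ∀ c, M ≤ c → ∀ T, 0 ≤ T → ‖v T‖ ≤ c → ∀ t, T ≤ t → ‖v t‖ ≤ c :=
    fun c hc T hT hvT t ht => norm_le_of_inner_deriv_neg_above hvd (hM0.trans hc)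
      (fun x hx hcx => (hforce _ (hc.trans_lt hcx) x (hT.trans hx) le_rfl).trans_lt
        (hneg _ (hc.trans_lt hcx))) hvT ht
  refine ⟨hinv M le_rfl, le_of_forall_gt_imp_ge_of_dense fun c hc => ?_⟩
  obtain ⟨T, hT, hvT⟩ := exists_norm_le_of_inner_deriv_le_neg (T := 0) hvd (neg_pos.2 (hneg c hc))
    (fun x hx hcx => by simpa using hforce c hc x hx hcx.le)
  exact limsup_le_of_le (isCoboundedUnder_le_of_le atTop fun t => norm_nonneg _)
    (eventually_atTop.2 ⟨T, hinv c hc.le T hT hvT⟩)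

theorem stmt_15 (d : ℕ) (a b q r : ℝ) (ha : 0 < a) (hb : 0 < b)
    (hq : 2 ≤ q) (hqr : q < r)
    (v : ℝ → EuclideanSpace ℝ (Fin d)) (hv : ContDiff ℝ 1 v)
    (hpos : ∀ t, 0 ≤ t → 0 < ‖v t‖)
    (hineq : ∀ t, 0 ≤ t →
      (inner ℝ (v t) (deriv v t) : ℝ) ≤ b * ‖v t‖ ^ q * (a / b - ‖v t‖ ^ (r - q))) :
    (∀ T, 0 ≤ T → ‖v T‖ ≤ (a / b) ^ (1 / (r - q)) →
      ∀ t, T ≤ t → ‖v t‖ ≤ (a / b) ^ (1 / (r - q))) ∧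
    Filter.limsup (fun t => ‖v t‖) Filter.atTop ≤ (a / b) ^ (1 / (r - q)) :=
  stmt_15_general d a b q r ha hb hq hqr v hv hineq
end

section
/- Let a, b > 0, 2 ≤ q < r, set C := (a/b)^{1/(r−q)}, and let y : [T, ∞) → ℝ be continuously differentiable with y(t) > C² for all t ≥ T (y representing ‖v_M(t)‖²) and (1/2) y'(t) ≤ −b y(t)^{q/2} (y(t)^{(r−q)/2} − C^{r−q}). Then y(t) − C² ≤ (y(T) − C²) exp(−b ξ₀ C^q (r−q)(t − T)) for all t ≥ T, where ξ₀ = C^{r−q−2} if r − q ≥ 2 and ξ₀ = y(T)^{(r−q−2)/2} if r − q < 2. -/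
/-!
Since `y > C²`, the inequality forces `y' ≤ 0`, so `y` decreases on `[T, ∞)` and stays in
`(C², y(T)]`. By the mean value theorem, `y^p - (C²)^p ≥ p ξ₀ (y - C²)` with
`p = (r - q)/2`, because `ξ₀` bounds `ξ^(p-1)` from below on `[C², y(T)]`: at the left end
when `p ≥ 1`, at the right end when `p < 1`. Together with `y^(q/2) ≥ C^q` this gives the
linear inequality `y' ≤ -K (y - C²)`, and Grönwall's inequality yields the exponential decay.
-/

open Real Set

lemma mul_sub_le_rpow_sub_rpow {p m c s : ℝ} (hc : 0 < c) (hcs : c ≤ s) (hp : 0 ≤ p)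
    (hm : ∀ ξ ∈ Icc c s, m ≤ ξ ^ (p - 1)) :
    p * m * (s - c) ≤ s ^ p - c ^ p := by
  rcases hcs.eq_or_lt with rfl | hlt
  · simp
  obtain ⟨ξ, hξ, hslope⟩ := exists_hasDerivAt_eq_slope (fun x => x ^ p)
    (fun x => p * x ^ (p - 1)) hlt
    (fun x hx => (continuousAt_rpow_const x p (.inl (hc.trans_le hx.1).ne')).continuousWithinAt)
    (fun x hx => hasDerivAt_rpow_const (.inl (hc.trans hx.1).ne'))
  have hsc : 0 < s - c := sub_pos.mpr hlt
  rw [eq_div_iff hsc.ne'] at hslope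
  rw [← hslope]
  gcongr
  exact hm ξ (Ioo_subset_Icc_self hξ)

lemma ite_rpow_sub_one_le {p c s ξ : ℝ} (hc : 0 < c) (hξ : ξ ∈ Icc c s) :
    (if 1 ≤ p then c ^ (p - 1) else s ^ (p - 1)) ≤ ξ ^ (p - 1) := by
  split_ifs with hp
  · exact rpow_le_rpow hc.le hξ.1 (by linarith)
  · exact rpow_le_rpow_of_nonpos (hc.trans_le hξ.1) hξ.2 (by linarith)

lemma le_neg_mul_sub_of_half_le_neg_mul_rpow_sub_rpow {b c s p k m d : ℝ} (hb : 0 ≤ b)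
    (hc : 0 < c) (hcs : c ≤ s) (hp : 0 ≤ p) (hk : 0 ≤ k) (hm : 0 ≤ m)
    (hm_le : ∀ ξ ∈ Icc c s, m ≤ ξ ^ (p - 1))
    (hd : (1 / 2) * d ≤ -b * s ^ k * (s ^ p - c ^ p)) :
    d ≤ -(2 * b * m * c ^ k * p) * (s - c) := by
  have hmvt := mul_sub_le_rpow_sub_rpow hc hcs hp hm_le
  have hck : c ^ k ≤ s ^ k := rpow_le_rpow hc.le hcs hk
  have hlin : 0 ≤ p * m * (s - c) := mul_nonneg (mul_nonneg hp hm) (sub_nonneg.mpr hcs)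
  calc d ≤ -(2 * b * s ^ k) * (s ^ p - c ^ p) := by linarith
    _ ≤ -(2 * b * s ^ k) * (p * m * (s - c)) := by
        have : 0 ≤ b * s ^ k := mul_nonneg hb (rpow_nonneg (hc.le.trans hcs) k)
        nlinarith
    _ ≤ -(2 * b * c ^ k) * (p * m * (s - c)) := by
        have : 0 ≤ b * (s ^ k - c ^ k) := mul_nonneg hb (sub_nonneg.mpr hck)
        nlinarith
    _ = -(2 * b * m * c ^ k * p) * (s - c) := by ring

lemma sub_le_mul_exp_of_deriv_le_neg_mul_sub {y : ℝ → ℝ} (hy : Differentiable ℝ y)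
    {c K T : ℝ} (h : ∀ t, T ≤ t → deriv y t ≤ -K * (y t - c)) :
    ∀ t, T ≤ t → y t - c ≤ (y T - c) * exp (-K * (t - T)) := by
  intro t ht
  have := le_gronwallBound_of_liminf_deriv_right_le (f := fun s => y s - c) (f' := deriv y)
    (K := -K) (ε := 0) (hy.continuous.sub continuous_const).continuousOn
    (fun s _ _ hr => ((hy s).hasDerivAt.sub_const c).hasDerivWithinAt.liminf_right_slope_le hr)
    le_rfl (fun s hs => by simpa using h s hs.1) t ⟨ht, le_rfl⟩
  rwa [gronwallBound_ε0] at this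

section RpowDifferentialInequality

variable {y : ℝ → ℝ} {b c p k T : ℝ}

lemma antitoneOn_of_half_deriv_le_neg_mul_rpow_sub_rpow (hy : Differentiable ℝ y) (hb : 0 ≤ b)
    (hc : 0 < c) (hp : 0 ≤ p) (hk : 0 ≤ k) (hyc : ∀ t, T ≤ t → c ≤ y t)
    (hineq : ∀ t, T ≤ t → (1 / 2) * deriv y t ≤ -b * y t ^ k * (y t ^ p - c ^ p)) :
    AntitoneOn y (Ici T) := by
  refine antitoneOn_of_deriv_nonpos (convex_Ici T) hy.continuous.continuousOn
    hy.differentiableOn fun t ht => ?_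
  rw [interior_Ici] at ht
  simpa using le_neg_mul_sub_of_half_le_neg_mul_rpow_sub_rpow (m := 0) hb hc (hyc t ht.le) hp hk
    le_rfl (fun ξ hξ => rpow_nonneg (hc.le.trans hξ.1) _) (hineq t ht.le)

/-- The `if` is the paper's `ξ₀` written with `c = C²` and `p = (r - q) / 2`. -/
lemma sub_le_mul_exp_of_half_deriv_le_neg_mul_rpow_sub_rpow (hy : Differentiable ℝ y)
    (hb : 0 ≤ b) (hc : 0 < c) (hp : 0 ≤ p) (hk : 0 ≤ k) (hyc : ∀ t, T ≤ t → c ≤ y t)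
    (hineq : ∀ t, T ≤ t → (1 / 2) * deriv y t ≤ -b * y t ^ k * (y t ^ p - c ^ p)) :
    ∀ t, T ≤ t → y t - c ≤ (y T - c) * exp (-(2 * b *
      (if 1 ≤ p then c ^ (p - 1) else y T ^ (p - 1)) * c ^ k * p) * (t - T)) := by
  have hanti := antitoneOn_of_half_deriv_le_neg_mul_rpow_sub_rpow hy hb hc hp hk hyc hineq
  refine sub_le_mul_exp_of_deriv_le_neg_mul_sub hy fun t ht => ?_
  refine le_neg_mul_sub_of_half_le_neg_mul_rpow_sub_rpow hb hc (hyc t ht) hp hk ?_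
    (fun ξ hξ => ite_rpow_sub_one_le hc ⟨hξ.1, hξ.2.trans (hanti self_mem_Ici ht ht)⟩)
    (hineq t ht)
  split_ifs
  exacts [rpow_nonneg hc.le _, rpow_nonneg (hc.le.trans (hyc T le_rfl)) _]

end RpowDifferentialInequality

theorem stmt_16 (a b q r T : ℝ) (ha : 0 < a) (hb : 0 < b) (hq : 2 ≤ q) (hqr : q < r)
    (C : ℝ) (hC : C = (a / b) ^ (1 / (r - q)))
    (y : ℝ → ℝ) (hy : ContDiff ℝ 1 y)
    (hyC : ∀ t, T ≤ t → C ^ 2 < y t)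
    (hineq : ∀ t, T ≤ t →
      (1 / 2) * deriv y t ≤ -b * (y t) ^ (q / 2) * ((y t) ^ ((r - q) / 2) - C ^ (r - q)))
    (ξ₀ : ℝ) (hξ₀ : ξ₀ = if 2 ≤ r - q then C ^ (r - q - 2) else (y T) ^ ((r - q - 2) / 2)) :
    ∀ t, T ≤ t →
      y t - C ^ 2 ≤ (y T - C ^ 2) * Real.exp (-b * ξ₀ * C ^ q * (r - q) * (t - T)) := by
  have hC0 : 0 < C := hC ▸ rpow_pos_of_pos (div_pos ha hb) _
  have hsq : ∀ e : ℝ, (C ^ 2) ^ e = C ^ (2 * e) := fun e => by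
    rw [← rpow_natCast_mul hC0.le]; norm_num
  have hcase : 1 ≤ (r - q) / 2 ↔ 2 ≤ r - q := by constructor <;> intro <;> linarith
  have key := sub_le_mul_exp_of_half_deriv_le_neg_mul_rpow_sub_rpow (p := (r - q) / 2)
    (k := q / 2) (hy.differentiable one_ne_zero) hb.le (by positivity) (by linarith)
    (by linarith) (fun t ht => (hyC t ht).le) fun t ht => by
      rw [hsq, show 2 * ((r - q) / 2) = r - q by ring]; exact hineq t ht
  intro t ht
  convert key t ht using 5
  rw [hξ₀, hsq, hsq]
  simp only [hcase]
  ring_nf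
end
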